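/- Let y : ℤ → ℝ be a sequence of positive reals satisfying the q-Painlevé I recurrence y_{n+4} y_n (1/y_{n+2} + 1)^2 = (y_{n+3} + 1)(y_{n+1} + 1) for all n ∈ ℤ. Define c₁ := y_3 (1/y_1 + 1) / (y_0 (1/y_2 + 1)) and c₂ := y_2 y_1^2 y_0 / ((y_1 + 1) c₁). Then y satisfies the q-Painlevé I equation: for all n ∈ ℤ, y_{n+1} y_{n-1} = c₂ c₁^n (y_n + 1) / y_n^2 (where c₁^n denotes the integer power of the positive real c₁). -/

import Mathlib

/-!
The quantity `τ n = y (n+1) y (n-1) y n ^ 2 / (y n + 1)` turns the fourth-order recurrence into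
`τ (n+2) τ n = τ (n+1) ^ 2`, i.e. `τ` is a geometric sequence. Its ratio is `c₁` and its value at
`0` is `c₂`, and `τ n = c₂ c₁ ^ n` is exactly the q-Painlevé I equation.
-/

open Function

theorem Function.Periodic.apply_eq_apply_zero {α : Type*} {f : ℤ → α} (h : Periodic f 1)
    (n : ℤ) : f n = f 0 := by
  simpa using h.int_mul_eq n

section Geometric

variable {K : Type*} [Field K] {t : ℤ → K}

theorem eq_mul_zpow_of_succ_eq_mul {r : K} (hr : r ≠ 0) (h : ∀ n, t (n + 1) = r * t n) (n : ℤ) :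
    t n = t 0 * r ^ n := by
  have hper : Periodic (fun n => t n / r ^ n) 1 := fun n => by
    simp only [h, zpow_add_one₀ hr]
    field_simp
  have := hper.apply_eq_apply_zero n
  simp only [zpow_zero, div_one] at this
  rw [← this]
  field_simp

theorem succ_eq_div_mul_of_mul_eq_sq (ht : ∀ n, t n ≠ 0)
    (h : ∀ n, t (n + 2) * t n = t (n + 1) ^ 2) (n : ℤ) : t (n + 1) = t 1 / t 0 * t n := by
  have hper : Periodic (fun n => t (n + 1) / t n) 1 := fun n => by
    rw [div_eq_div_iff (ht _) (ht _), add_assoc, one_add_one_eq_two]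
    linear_combination h n
  have := hper.apply_eq_apply_zero n
  simp only [zero_add] at this
  rw [← this, div_mul_cancel₀ _ (ht n)]

theorem eq_mul_zpow_of_mul_eq_sq (ht : ∀ n, t n ≠ 0)
    (h : ∀ n, t (n + 2) * t n = t (n + 1) ^ 2) (n : ℤ) : t n = t 0 * (t 1 / t 0) ^ n :=
  eq_mul_zpow_of_succ_eq_mul (div_ne_zero (ht 1) (ht 0)) (succ_eq_div_mul_of_mul_eq_sq ht h) n

end Geometric

section Invariant

variable {K : Type*} [Field K] (y : ℤ → K)

def qPIInvariant (n : ℤ) : K := y (n + 1) * y (n - 1) * y n ^ 2 / (y n + 1)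

variable {y}

theorem qPIInvariant_ne_zero (hy : ∀ n, y n ≠ 0) (hy₁ : ∀ n, y n + 1 ≠ 0) (n : ℤ) :
    qPIInvariant y n ≠ 0 := by
  have := hy (n + 1); have := hy (n - 1); have := hy n; have := hy₁ n
  unfold qPIInvariant
  positivity

theorem qPIInvariant_mul_eq_sq (hy : ∀ n, y n ≠ 0) (hy₁ : ∀ n, y n + 1 ≠ 0)
    (hrec : ∀ n : ℤ,
      y (n + 4) * y n * (1 / y (n + 2) + 1) ^ 2 = (y (n + 3) + 1) * (y (n + 1) + 1))
    (n : ℤ) : qPIInvariant y (n + 2) * qPIInvariant y n = qPIInvariant y (n + 1) ^ 2 := by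
  have h := hrec (n - 1)
  simp only [qPIInvariant, show n - 1 + 4 = n + 3 by ring, show n - 1 + 3 = n + 2 by ring,
    show n - 1 + 2 = n + 1 by ring, show n - 1 + 1 = n by ring,
    show n + 2 + 1 = n + 3 by ring, show n + 2 - 1 = n + 1 by ring,
    show n + 1 + 1 = n + 2 by ring, show n + 1 - 1 = n by ring] at h ⊢
  have := hy n; have := hy (n + 1); have := hy (n + 2)
  have := hy₁ n; have := hy₁ (n + 1); have := hy₁ (n + 2)
  field_simp at h ⊢
  linear_combination h

theorem qPIInvariant_one : qPIInvariant y 1 = y 2 * y 1 ^ 2 * y 0 / (y 1 + 1) := by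
  simp only [qPIInvariant, show (1 : ℤ) + 1 = 2 by norm_num, sub_self]
  ring

theorem qPIInvariant_two_div_one (hy : ∀ n, y n ≠ 0) (hy₁ : ∀ n, y n + 1 ≠ 0) :
    qPIInvariant y 2 / qPIInvariant y 1 = y 3 * (1 / y 1 + 1) / (y 0 * (1 / y 2 + 1)) := by
  simp only [qPIInvariant, show (2 : ℤ) + 1 = 3 by norm_num, show (2 : ℤ) - 1 = 1 by norm_num,
    show (1 : ℤ) + 1 = 2 by norm_num, sub_self]
  have := hy 0; have := hy 3; have := hy₁ 1; have := hy₁ 2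
  rw [div_add_one (hy 1), div_add_one (hy 2), add_comm 1 (y 1), add_comm 1 (y 2)]
  field_simp

end Invariant

/-- Positive solutions of the q-Painlevé I recurrence satisfy the
q-Painlevé I equation `y (n+1) * y (n-1) = c₂ * c₁^n * (y n + 1) / (y n)^2`,
with `c₁ := y 3 * (1/y 1 + 1) / (y 0 * (1/y 2 + 1))` and
`c₂ := y 2 * (y 1)^2 * y 0 / ((y 1 + 1) * c₁)`. -/
theorem qPI_equation
    (y : ℤ → ℝ) (hy : ∀ n : ℤ, 0 < y n)
    (hrec : ∀ n : ℤ,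
      y (n + 4) * y n * (1 / y (n + 2) + 1) ^ 2 = (y (n + 3) + 1) * (y (n + 1) + 1))
    (c₁ c₂ : ℝ)
    (hc₁ : c₁ = y 3 * (1 / y 1 + 1) / (y 0 * (1 / y 2 + 1)))
    (hc₂ : c₂ = y 2 * (y 1) ^ 2 * y 0 / ((y 1 + 1) * c₁)) :
    ∀ n : ℤ, y (n + 1) * y (n - 1) = c₂ * c₁ ^ n * (y n + 1) / (y n) ^ 2 := by
  have hy₀ (n : ℤ) : y n ≠ 0 := (hy n).ne'
  have hy₁ (n : ℤ) : y n + 1 ≠ 0 := by linarith [hy n]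
  have ht := qPIInvariant_ne_zero hy₀ hy₁
  have hsq := qPIInvariant_mul_eq_sq hy₀ hy₁ hrec
  have hc₁_eq : c₁ = qPIInvariant y 1 / qPIInvariant y 0 := by
    rw [hc₁, ← qPIInvariant_two_div_one hy₀ hy₁, div_eq_iff (ht 1)]
    exact succ_eq_div_mul_of_mul_eq_sq ht hsq 1
  have hc₂_eq : c₂ = qPIInvariant y 0 := by
    rw [hc₂, div_mul_eq_div_div, ← qPIInvariant_one, hc₁_eq, div_div_cancel₀ (ht 1)]
  intro n
  have h := eq_mul_zpow_of_mul_eq_sq ht hsq n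
  rw [← hc₁_eq, ← hc₂_eq, qPIInvariant, div_eq_iff (hy₁ n)] at h
  rw [eq_div_iff (pow_ne_zero 2 (hy₀ n))]
  linear_combination h
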